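/- arXiv:0710.1037 — 2 statements merged into one kernel-verified Lean document; each statement's English description precedes it below -/
import Mathlib

section
/- Let n, k be positive integers with k ≤ n, let 𝔦 ⊂ {1,…,n} be an index set of cardinality k with complement 𝔦°, and let A : ℝ × ℂ^{n×k} → ℂ^{n×n} be continuous. Suppose Y : ℝ → ℂ^{n×k} is differentiable and satisfies Y'(x) = A(x, Y(x))·Y(x), and suppose Y admits a differentiable decomposition Y(x) = y(x)·u(x) where for each x the matrix u(x) ∈ ℂ^{k×k} is invertible and y(x) ∈ ℂ^{n×k} has its 𝔦-rows equal to the k×k identity matrix. Let ŷ(x) ∈ ℂ^{(n−k)×k} denote the 𝔦°-rows of y(x), and let a(x), b(x), c(x), d(x) denote respectively the 𝔦×𝔦, 𝔦×𝔦°, 𝔦°×𝔦 and 𝔦°×𝔦° submatrices of A(x, Y(x)). Then ŷ'(x) = c(x) + d(x)·ŷ(x) − ŷ(x)·(a(x) + b(x)·ŷ(x)) and u'(x) = (a(x) + b(x)·ŷ(x))·u(x) for all x. -/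
open Matrix

/-- Entrywise derivative of a matrix-valued function of a real variable. -/
def MHasDerivAt {m k : Type*} (f : ℝ → Matrix m k ℂ) (f' : Matrix m k ℂ) (x : ℝ) : Prop :=
  ∀ i j, HasDerivAt (fun t => f t i j) (f' i j) x

/-- The order embedding of `Fin k` into `Fin n` enumerating a finset of cardinality `k`. -/
noncomputable def emb {n k : ℕ} (s : Finset (Fin n)) (h : s.card = k) : Fin k → Fin n :=
  fun i => (s.orderIsoOfFin h i : Fin n)

/-!
Differentiating `Y = y·u` and comparing with `Y' = A·Y` gives `A·y·u = y'·u + y·u'`.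
Since the `𝔦`-rows of `y` are constantly the identity, those of `y'` vanish, so the `𝔦`-rows
of this identity read `(a + b·ŷ)·u = u'`; substituting into its `𝔦°`-rows,
`(c + d·ŷ)·u = ŷ'·u + ŷ·(a + b·ŷ)·u`, and cancelling the invertible `u` gives the Riccati
equation for `ŷ`.
-/

section Calculus

variable {m l p : Type*}

theorem MHasDerivAt.unique {f : ℝ → Matrix m p ℂ} {f₁ f₂ : Matrix m p ℂ} {x : ℝ}
    (h₁ : MHasDerivAt f f₁ x) (h₂ : MHasDerivAt f f₂ x) : f₁ = f₂ :=
  ext fun i j => (h₁ i j).unique (h₂ i j)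

theorem mHasDerivAt_const (M : Matrix m p ℂ) (x : ℝ) : MHasDerivAt (fun _ => M) 0 x :=
  fun i j => hasDerivAt_const x (M i j)

theorem MHasDerivAt.submatrix {m' p' : Type*} {f : ℝ → Matrix m p ℂ} {f' : Matrix m p ℂ}
    {x : ℝ} (hf : MHasDerivAt f f' x) (r : m' → m) (c : p' → p) :
    MHasDerivAt (fun t => (f t).submatrix r c) (f'.submatrix r c) x :=
  fun i j => hf (r i) (c j)

theorem MHasDerivAt.mul [Fintype l] {f : ℝ → Matrix m l ℂ} {g : ℝ → Matrix l p ℂ}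
    {f' : Matrix m l ℂ} {g' : Matrix l p ℂ} {x : ℝ}
    (hf : MHasDerivAt f f' x) (hg : MHasDerivAt g g' x) :
    MHasDerivAt (fun t => f t * g t) (f' * g x + f x * g') x := by
  intro i j
  simp only [Matrix.add_apply, mul_apply, ← Finset.sum_add_distrib]
  exact HasDerivAt.fun_sum fun q _ => (hf i q).mul (hg q j)

end Calculus

section Blocks

variable {α : Type*} {n k : ℕ} (s : Finset (Fin n)) (hs : s.card = k) (hsc : sᶜ.card = n - k)

theorem Matrix.submatrix_mul_id {m l p : Type*} [Fintype l] [NonUnitalNonAssocSemiring α]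
    (B : Matrix m l α) (C : Matrix l p α) {m' : Type*} (r : m' → m) :
    (B * C).submatrix r id = B.submatrix r id * C := by
  rw [submatrix_mul B C r id id Function.bijective_id, submatrix_id_id]

theorem Matrix.submatrix_mul_eq_emb_add_emb_compl {m p : Type*} [NonUnitalNonAssocSemiring α]
    (B : Matrix m (Fin n) α) (C : Matrix (Fin n) p α) {m' p' : Type*} (r : m' → m)
    (c : p' → p) :
    (B * C).submatrix r c
      = B.submatrix r (emb s hs) * C.submatrix (emb s hs) c
        + B.submatrix r (emb sᶜ hsc) * C.submatrix (emb sᶜ hsc) c := by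
  ext i j
  simp only [submatrix_apply, add_apply, mul_apply]
  rw [← (finSumEquivOfFinset hs hsc).sum_comp, Fintype.sum_sum_type]
  rfl

theorem Matrix.mul_right_cancel_of_isUnit [Semiring α] {m p : Type*} [Fintype p]
    [DecidableEq p] {B C : Matrix m p α} {u : Matrix p p α} (hu : IsUnit u)
    (h : B * u = C * u) : B = C := by
  obtain ⟨U, rfl⟩ := hu
  simpa only [Matrix.mul_assoc, Units.mul_inv, Matrix.mul_one]
    using congrArg (· * (↑U⁻¹ : Matrix p p α)) h

theorem riccati_of_mul_eq [Ring α] (A : Matrix (Fin n) (Fin n) α)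
    (y Dy : Matrix (Fin n) (Fin k) α) (u Du : Matrix (Fin k) (Fin k) α) (hu : IsUnit u)
    (h : A * (y * u) = Dy * u + y * Du) (hy : y.submatrix (emb s hs) id = 1)
    (hDy : Dy.submatrix (emb s hs) id = 0) :
    Dy.submatrix (emb sᶜ hsc) id
        = A.submatrix (emb sᶜ hsc) (emb s hs)
          + A.submatrix (emb sᶜ hsc) (emb sᶜ hsc) * y.submatrix (emb sᶜ hsc) id
          - y.submatrix (emb sᶜ hsc) id
            * (A.submatrix (emb s hs) (emb s hs)
              + A.submatrix (emb s hs) (emb sᶜ hsc) * y.submatrix (emb sᶜ hsc) id)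
      ∧ Du = (A.submatrix (emb s hs) (emb s hs)
          + A.submatrix (emb s hs) (emb sᶜ hsc) * y.submatrix (emb sᶜ hsc) id) * u := by
  have rows : ∀ {m'} (r : Fin m' → Fin n), (A * (y * u)).submatrix r id
      = (A.submatrix r (emb s hs) + A.submatrix r (emb sᶜ hsc) * y.submatrix (emb sᶜ hsc) id)
        * u := by
    intro m' r
    rw [submatrix_mul_eq_emb_add_emb_compl s hs hsc, submatrix_mul_id, submatrix_mul_id, hy,
      one_mul, Matrix.add_mul, Matrix.mul_assoc]
  have top := congrArg (·.submatrix (emb s hs) id) h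
  rw [rows, submatrix_add, Pi.add_apply, Pi.add_apply, submatrix_mul_id, submatrix_mul_id, hy,
    hDy, zero_mul, one_mul, zero_add] at top
  refine ⟨?_, top.symm⟩
  have bottom := congrArg (·.submatrix (emb sᶜ hsc) id) h
  rw [rows, submatrix_add, Pi.add_apply, Pi.add_apply, submatrix_mul_id, submatrix_mul_id,
    ← top, ← Matrix.mul_assoc, ← Matrix.add_mul] at bottom
  exact eq_sub_of_add_eq (mul_right_cancel_of_isUnit hu bottom.symm)

end Blocks

theorem coupled_grassmann_fibre_flow_general
    (n k : ℕ)
    (𝔦 : Finset (Fin n)) (h𝔦 : 𝔦.card = k) (h𝔦c : 𝔦ᶜ.card = n - k)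
    (A : ℝ → Matrix (Fin n) (Fin k) ℂ → Matrix (Fin n) (Fin n) ℂ)
    (Y y : ℝ → Matrix (Fin n) (Fin k) ℂ)
    (u : ℝ → Matrix (Fin k) (Fin k) ℂ)
    (Dy : ℝ → Matrix (Fin n) (Fin k) ℂ)
    (Du : ℝ → Matrix (Fin k) (Fin k) ℂ)
    (hY : ∀ x, MHasDerivAt Y (A x (Y x) * Y x) x)
    (hy : ∀ x, MHasDerivAt y (Dy x) x)
    (hu : ∀ x, MHasDerivAt u (Du x) x)
    (hdecomp : ∀ x, Y x = y x * u x)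
    (huinv : ∀ x, IsUnit (u x))
    (hyid : ∀ x, (y x).submatrix (emb 𝔦 h𝔦) id = 1) :
    ∀ x : ℝ,
      (Dy x).submatrix (emb 𝔦ᶜ h𝔦c) id
          = (A x (Y x)).submatrix (emb 𝔦ᶜ h𝔦c) (emb 𝔦 h𝔦)
            + (A x (Y x)).submatrix (emb 𝔦ᶜ h𝔦c) (emb 𝔦ᶜ h𝔦c)
              * (y x).submatrix (emb 𝔦ᶜ h𝔦c) id
            - (y x).submatrix (emb 𝔦ᶜ h𝔦c) id
              * ((A x (Y x)).submatrix (emb 𝔦 h𝔦) (emb 𝔦 h𝔦)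
                 + (A x (Y x)).submatrix (emb 𝔦 h𝔦) (emb 𝔦ᶜ h𝔦c)
                   * (y x).submatrix (emb 𝔦ᶜ h𝔦c) id)
        ∧
      Du x
          = ((A x (Y x)).submatrix (emb 𝔦 h𝔦) (emb 𝔦 h𝔦)
             + (A x (Y x)).submatrix (emb 𝔦 h𝔦) (emb 𝔦ᶜ h𝔦c)
               * (y x).submatrix (emb 𝔦ᶜ h𝔦c) id) * u x := by
  intro x
  have product_rule : A x (Y x) * (y x * u x) = Dy x * u x + y x * Du x := by
    rw [← hdecomp x]
    refine (hY x).unique ?_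
    rw [show Y = fun t => y t * u t from funext hdecomp]
    exact (hy x).mul (hu x)
  have identity_rows_deriv_eq_zero : (Dy x).submatrix (emb 𝔦 h𝔦) id = 0 := by
    refine ((hy x).submatrix _ _).unique ?_
    rw [funext hyid]
    exact mHasDerivAt_const 1 x
  exact riccati_of_mul_eq 𝔦 h𝔦 h𝔦c _ _ _ _ _ (huinv x) product_rule (hyid x)
    identity_rows_deriv_eq_zero

/-- Theorem (coupled flow on the Grassmannian base and the fibres):
if `Y' = A(x,Y)·Y` and `Y = y·u` with `u` invertible and the `𝔦`-rows of `y` the identity,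
then `ŷ' = c + d·ŷ − ŷ·(a + b·ŷ)` and `u' = (a + b·ŷ)·u`. -/
theorem coupled_grassmann_fibre_flow
    (n k : ℕ) (hn : 0 < n) (hk : 0 < k) (hkn : k ≤ n)
    (𝔦 : Finset (Fin n)) (h𝔦 : 𝔦.card = k) (h𝔦c : 𝔦ᶜ.card = n - k)
    (A : ℝ → Matrix (Fin n) (Fin k) ℂ → Matrix (Fin n) (Fin n) ℂ)
    (hA : Continuous fun p : ℝ × Matrix (Fin n) (Fin k) ℂ => A p.1 p.2)
    (Y y : ℝ → Matrix (Fin n) (Fin k) ℂ)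
    (u : ℝ → Matrix (Fin k) (Fin k) ℂ)
    (Dy : ℝ → Matrix (Fin n) (Fin k) ℂ)
    (Du : ℝ → Matrix (Fin k) (Fin k) ℂ)
    (hY : ∀ x, MHasDerivAt Y (A x (Y x) * Y x) x)
    (hy : ∀ x, MHasDerivAt y (Dy x) x)
    (hu : ∀ x, MHasDerivAt u (Du x) x)
    (hdecomp : ∀ x, Y x = y x * u x)
    (huinv : ∀ x, IsUnit (u x))
    (hyid : ∀ x, (y x).submatrix (emb 𝔦 h𝔦) id = 1) :
    ∀ x : ℝ,
      (Dy x).submatrix (emb 𝔦ᶜ h𝔦c) id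
          = (A x (Y x)).submatrix (emb 𝔦ᶜ h𝔦c) (emb 𝔦 h𝔦)
            + (A x (Y x)).submatrix (emb 𝔦ᶜ h𝔦c) (emb 𝔦ᶜ h𝔦c)
              * (y x).submatrix (emb 𝔦ᶜ h𝔦c) id
            - (y x).submatrix (emb 𝔦ᶜ h𝔦c) id
              * ((A x (Y x)).submatrix (emb 𝔦 h𝔦) (emb 𝔦 h𝔦)
                 + (A x (Y x)).submatrix (emb 𝔦 h𝔦) (emb 𝔦ᶜ h𝔦c)
                   * (y x).submatrix (emb 𝔦ᶜ h𝔦c) id)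
        ∧
      Du x
          = ((A x (Y x)).submatrix (emb 𝔦 h𝔦) (emb 𝔦 h𝔦)
             + (A x (Y x)).submatrix (emb 𝔦 h𝔦) (emb 𝔦ᶜ h𝔦c)
               * (y x).submatrix (emb 𝔦ᶜ h𝔦c) id) * u x :=
  coupled_grassmann_fibre_flow_general n k 𝔦 h𝔦 h𝔦c A Y y u Dy Du hY hy hu hdecomp huinv hyid
end

section
/- Let n, k be positive integers with k ≤ n and let 𝔦, 𝔦' ⊂ {1,…,n} be index sets of cardinality k. Let Y ∈ ℂ^{n×k} have rank k with both Y_𝔦 and Y_{𝔦'} invertible, and let y := Y·(Y_𝔦)^{−1} be its representative with identity 𝔦-th submatrix. Then the 𝔦'-th k×k submatrix u := y_{𝔦'} of y is invertible, and the representative of the same k-plane with identity 𝔦'-th submatrix is y·u^{−1}, i.e. Y·(Y_{𝔦'})^{−1} = (Y·(Y_𝔦)^{−1})·((Y·(Y_𝔦)^{−1})_{𝔦'})^{−1}. Moreover, the chart-transition map sending the 𝔦°-rows of y to the (𝔦')°-rows of y·u^{−1} is holomorphic (complex differentiable) at every point ŷ ∈ ℂ^{(n−k)×k} for which the corresponding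 submatrix u is invertible. -/
/-! With `A = Y_𝔦` and `B = Y_𝔦'`, the `𝔦'`-block of `y = Y A⁻¹` is `B A⁻¹`, a product of units,
and `y (B A⁻¹)⁻¹ = Y B⁻¹`. The chart transition is built from the affine embedding of the chart,
matrix products, row selections and one inversion; by Cramer's rule `M⁻¹ = (det M)⁻¹ • adj M`
the entries of the inverse are polynomials divided by the determinant, so everything is
holomorphic wherever that determinant does not vanish. -/

open Matrix

attribute [local instance] Matrix.normedAddCommGroup Matrix.normedSpace

/-- The `n × k` matrix whose `𝔦`-rows are `top` and whose `𝔦°`-rows are `bot`. -/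
noncomputable def assemble {n k m : ℕ} (𝔦 : Finset (Fin n)) (h : 𝔦.card = k)
    (hc : 𝔦ᶜ.card = m) (top : Matrix (Fin k) (Fin k) ℂ) (bot : Matrix (Fin m) (Fin k) ℂ) :
    Matrix (Fin n) (Fin k) ℂ :=
  fun i j =>
    if hi : i ∈ 𝔦 then top ((𝔦.orderIsoOfFin h).symm ⟨i, hi⟩) j
    else bot ((𝔦ᶜ.orderIsoOfFin hc).symm ⟨i, Finset.mem_compl.mpr hi⟩) j

section MatrixCalculus

variable {𝕜 E : Type*} [NontriviallyNormedField 𝕜] [NormedAddCommGroup E] [NormedSpace 𝕜 E]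
  {l m n o : Type*} [Fintype n] {x : E}

theorem differentiableAt_matrix_iff {f : E → Matrix m n 𝕜} :
    DifferentiableAt 𝕜 f x ↔ ∀ i j, DifferentiableAt 𝕜 (fun e => f e i j) x :=
  differentiableAt_pi.trans (forall_congr' fun _ => differentiableAt_pi)

theorem DifferentiableAt.matrix_apply {f : E → Matrix m n 𝕜} (hf : DifferentiableAt 𝕜 f x)
    (i : m) (j : n) : DifferentiableAt 𝕜 (fun e => f e i j) x :=
  differentiableAt_matrix_iff.mp hf i j

theorem DifferentiableAt.matrix_submatrix [Fintype o] {f : E → Matrix m n 𝕜}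
    (hf : DifferentiableAt 𝕜 f x) (r : l → m) (c : o → n) :
    DifferentiableAt 𝕜 (fun e => (f e).submatrix r c) x :=
  differentiableAt_matrix_iff.mpr fun i j => hf.matrix_apply (r i) (c j)

theorem DifferentiableAt.matrix_mul [Fintype m] {f : E → Matrix l m 𝕜} {g : E → Matrix m n 𝕜}
    (hf : DifferentiableAt 𝕜 f x) (hg : DifferentiableAt 𝕜 g x) :
    DifferentiableAt 𝕜 (fun e => f e * g e) x := by
  refine differentiableAt_matrix_iff.mpr fun i j => ?_
  simp only [mul_apply]
  exact .fun_sum fun k _ => (hf.matrix_apply i k).mul (hg.matrix_apply k j)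

theorem DifferentiableAt.matrix_det [DecidableEq n] {f : E → Matrix n n 𝕜}
    (hf : DifferentiableAt 𝕜 f x) : DifferentiableAt 𝕜 (fun e => (f e).det) x := by
  simp only [det_apply']
  exact .fun_sum fun σ _ => .const_mul
    (HasFDerivAt.finsetProd fun i _ => (hf.matrix_apply (σ i) i).hasFDerivAt).differentiableAt _

theorem DifferentiableAt.matrix_updateRow [DecidableEq m] {f : E → Matrix m n 𝕜}
    (hf : DifferentiableAt 𝕜 f x) (i : m) (b : n → 𝕜) :
    DifferentiableAt 𝕜 (fun e => (f e).updateRow i b) x := by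
  refine differentiableAt_matrix_iff.mpr fun i' j => ?_
  by_cases hi : i' = i
  · simp only [hi, updateRow_self]
    exact differentiableAt_const _
  · simpa only [updateRow_ne hi] using hf.matrix_apply i' j

theorem DifferentiableAt.matrix_adjugate [DecidableEq n] {f : E → Matrix n n 𝕜}
    (hf : DifferentiableAt 𝕜 f x) : DifferentiableAt 𝕜 (fun e => (f e).adjugate) x := by
  refine differentiableAt_matrix_iff.mpr fun i j => ?_
  simp only [adjugate_apply]
  exact (hf.matrix_updateRow j (Pi.single i 1)).matrix_det

theorem DifferentiableAt.matrix_inv [DecidableEq n] {f : E → Matrix n n 𝕜}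
    (hf : DifferentiableAt 𝕜 f x) (hx : IsUnit (f x).det) :
    DifferentiableAt 𝕜 (fun e => (f e)⁻¹) x := by
  simp only [inv_def, Ring.inverse_eq_inv']
  exact (hf.matrix_det.inv hx.ne_zero).smul hf.matrix_adjugate

end MatrixCalculus

section ChangeOfRepresentative

variable {R : Type*} [CommRing R] {m k : Type*} [Fintype k] [DecidableEq k]
  (Y : Matrix m k R) (r r' : k → m)

theorem submatrix_mul_nonsing_inv_submatrix :
    (Y * (Y.submatrix r id)⁻¹).submatrix r' id = Y.submatrix r' id * (Y.submatrix r id)⁻¹ := by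
  rw [submatrix_mul _ _ _ id _ Function.bijective_id, submatrix_id_id]

theorem isUnit_submatrix_mul_nonsing_inv_submatrix (hr : IsUnit (Y.submatrix r id))
    (hr' : IsUnit (Y.submatrix r' id)) :
    IsUnit ((Y * (Y.submatrix r id)⁻¹).submatrix r' id) := by
  rw [submatrix_mul_nonsing_inv_submatrix]
  exact hr'.mul (isUnit_nonsing_inv_iff.mpr hr)

theorem mul_nonsing_inv_submatrix_mul_nonsing_inv (hr : IsUnit (Y.submatrix r id)) :
    Y * (Y.submatrix r id)⁻¹ * ((Y * (Y.submatrix r id)⁻¹).submatrix r' id)⁻¹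
      = Y * (Y.submatrix r' id)⁻¹ := by
  have hdet := (isUnit_iff_isUnit_det _).mp hr
  rw [submatrix_mul_nonsing_inv_submatrix, Matrix.mul_inv_rev, nonsing_inv_nonsing_inv _ hdet,
    Matrix.mul_assoc, ← Matrix.mul_assoc _ (Y.submatrix r id), nonsing_inv_mul _ hdet,
    Matrix.one_mul]

end ChangeOfRepresentative

theorem differentiable_assemble {n k m : ℕ} (𝔦 : Finset (Fin n)) (h : 𝔦.card = k)
    (hc : 𝔦ᶜ.card = m) (top : Matrix (Fin k) (Fin k) ℂ) :
    Differentiable ℂ (assemble 𝔦 h hc top) := fun bot₀ => by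
  refine differentiableAt_matrix_iff.mpr fun i j => ?_
  unfold assemble
  split_ifs
  · exact differentiableAt_const _
  · exact differentiableAt_id.matrix_apply _ _

theorem grassmann_chart_transition_holomorphic_general
    (n k : ℕ)
    (𝔦 𝔦' : Finset (Fin n)) (h𝔦 : 𝔦.card = k) (h𝔦' : 𝔦'.card = k)
    (h𝔦c : 𝔦ᶜ.card = n - k) (h𝔦'c : 𝔦'ᶜ.card = n - k)
    (Y : Matrix (Fin n) (Fin k) ℂ)
    (hY𝔦 : IsUnit (Y.submatrix (emb 𝔦 h𝔦) id))
    (hY𝔦' : IsUnit (Y.submatrix (emb 𝔦' h𝔦') id)) :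
    IsUnit ((Y * (Y.submatrix (emb 𝔦 h𝔦) id)⁻¹).submatrix (emb 𝔦' h𝔦') id) ∧
    Y * (Y.submatrix (emb 𝔦' h𝔦') id)⁻¹
      = (Y * (Y.submatrix (emb 𝔦 h𝔦) id)⁻¹)
        * ((Y * (Y.submatrix (emb 𝔦 h𝔦) id)⁻¹).submatrix (emb 𝔦' h𝔦') id)⁻¹ ∧
    (∀ yh₀ : Matrix (Fin (n - k)) (Fin k) ℂ,
      IsUnit ((assemble 𝔦 h𝔦 h𝔦c 1 yh₀).submatrix (emb 𝔦' h𝔦') id) →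
      DifferentiableAt ℂ
        (fun yh : Matrix (Fin (n - k)) (Fin k) ℂ =>
          ((assemble 𝔦 h𝔦 h𝔦c 1 yh
              * ((assemble 𝔦 h𝔦 h𝔦c 1 yh).submatrix (emb 𝔦' h𝔦') id)⁻¹).submatrix
            (emb 𝔦'ᶜ h𝔦'c) id))
        yh₀) := by
  refine ⟨isUnit_submatrix_mul_nonsing_inv_submatrix Y _ _ hY𝔦 hY𝔦',
    (mul_nonsing_inv_submatrix_mul_nonsing_inv Y _ _ hY𝔦).symm, fun yh₀ hu => ?_⟩
  have hy := (differentiable_assemble 𝔦 h𝔦 h𝔦c 1).differentiableAt (x := yh₀)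
  exact (hy.matrix_mul ((hy.matrix_submatrix _ id).matrix_inv
    ((isUnit_iff_isUnit_det _).mp hu))).matrix_submatrix _ id

/-- Chart transitions on the Grassmann manifold: if both `Y_𝔦` and `Y_𝔦'` are
invertible and `y := Y·(Y_𝔦)⁻¹` is the representative with identity `𝔦`-submatrix,
then `u := y_𝔦'` is invertible, `Y·(Y_𝔦')⁻¹ = y·u⁻¹`, and the induced transition map
between the charts (sending the `𝔦°`-rows of `y` to the `𝔦'°`-rows of `y·u⁻¹`) is
holomorphic wherever the relevant submatrix is invertible. -/
theorem grassmann_chart_transition_holomorphic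
    (n k : ℕ) (hn : 0 < n) (hk : 0 < k) (hkn : k ≤ n)
    (𝔦 𝔦' : Finset (Fin n)) (h𝔦 : 𝔦.card = k) (h𝔦' : 𝔦'.card = k)
    (h𝔦c : 𝔦ᶜ.card = n - k) (h𝔦'c : 𝔦'ᶜ.card = n - k)
    (Y : Matrix (Fin n) (Fin k) ℂ) (hrank : Y.rank = k)
    (hY𝔦 : IsUnit (Y.submatrix (emb 𝔦 h𝔦) id))
    (hY𝔦' : IsUnit (Y.submatrix (emb 𝔦' h𝔦') id)) :
    IsUnit ((Y * (Y.submatrix (emb 𝔦 h𝔦) id)⁻¹).submatrix (emb 𝔦' h𝔦') id) ∧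
    Y * (Y.submatrix (emb 𝔦' h𝔦') id)⁻¹
      = (Y * (Y.submatrix (emb 𝔦 h𝔦) id)⁻¹)
        * ((Y * (Y.submatrix (emb 𝔦 h𝔦) id)⁻¹).submatrix (emb 𝔦' h𝔦') id)⁻¹ ∧
    (∀ yh₀ : Matrix (Fin (n - k)) (Fin k) ℂ,
      IsUnit ((assemble 𝔦 h𝔦 h𝔦c 1 yh₀).submatrix (emb 𝔦' h𝔦') id) →
      DifferentiableAt ℂ
        (fun yh : Matrix (Fin (n - k)) (Fin k) ℂ =>
          ((assemble 𝔦 h𝔦 h𝔦c 1 yh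
              * ((assemble 𝔦 h𝔦 h𝔦c 1 yh).submatrix (emb 𝔦' h𝔦') id)⁻¹).submatrix
            (emb 𝔦'ᶜ h𝔦'c) id))
        yh₀) :=
  grassmann_chart_transition_holomorphic_general n k 𝔦 𝔦' h𝔦 h𝔦' h𝔦c h𝔦'c Y hY𝔦 hY𝔦'
end
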